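/- arXiv:1601.07290 — 2 statements merged into one kernel-verified Lean document; each statement's English description precedes it below -/
import Mathlib

section
/- Let D ≥ 3, μ ≠ 0, and consider the ideal photon gas with h(n) = (kγ/(γ-1)) n^{γ-1}, γ = D/(D-1), k > 0, on a metric function f positive and twice differentiable. At a critical point (r_c, n_c) (so r_c f'(r_c) = 2 f(r_c) and n_c = sqrt((D-2)/f(r_c))·|μ|/r_c^{D-2}), the determinant of the linearization matrix of the system (ṙ, ṅ) = (∂_n F, -∂_r F), F(r,n) = h(n)²(f(r) + μ²/(r^{2(D-2)} n²)), is negative if and only if (f r⁻²)''(r_c) < 0. -/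
/-!
For `n > 0` the Hamiltonian is `F = c² (f(r) n^s + μ² r^{-m} n^{s-2})` with `c = kγ/(γ-1)`,
`s = 2(γ-1) = 2/(D-1)` and `m = 2(D-2)`, so that `s (m + 2) = 4`. At the critical point the
relations `r f' = 2f` and `m μ² r^{-m} = 2 n² f` turn the entries of `M` into
`∂ᵣ∂ₙF = 4c² n^{s-1} f/r`, `∂ₙ²F = 2s c² n^{s-2} f` and `∂ᵣ²F = c² n^s (f'' + 2(m+1) f/r²)`,
whence `det M = 2s c⁴ f n^{2s-2} (f'' - 2f/r²)`. Since also
`(f r⁻²)'' = (f'' - 4f'/r + 6f/r²)/r² = (f'' - 2f/r²)/r²`, both have the sign of `f'' - 2f/r²`.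
-/

open Filter Topology

theorem deriv_deriv_div_sq {f : ℝ → ℝ} {r : ℝ} (hf : ∀ᶠ x in 𝓝 r, DifferentiableAt ℝ f x)
    (hf' : DifferentiableAt ℝ (deriv f) r) (hr : r ≠ 0) :
    deriv (deriv fun x => f x / x ^ 2) r =
      deriv (deriv f) r / r ^ 2 - 4 * deriv f r / r ^ 3 + 6 * f r / r ^ 4 := by
  have hfirst : deriv (fun x => f x / x ^ 2) =ᶠ[𝓝 r]
      fun x => deriv f x / x ^ 2 - 2 * f x / x ^ 3 := by
    filter_upwards [hf, eventually_ne_nhds hr] with x hfx hx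
    rw [(hfx.hasDerivAt.fun_div (hasDerivAt_pow 2 x) (pow_ne_zero 2 hx)).deriv]
    field_simp
    ring
  have h := (hf'.hasDerivAt.fun_div (hasDerivAt_pow 2 r) (pow_ne_zero 2 hr)).fun_sub
    ((hf.self_of_nhds.hasDerivAt.const_mul 2).fun_div (hasDerivAt_pow 3 r) (pow_ne_zero 3 hr))
  rw [hfirst.deriv_eq, h.deriv]
  field_simp
  ring

theorem deriv_deriv_div_sq_of_mul_deriv_eq {f : ℝ → ℝ} {r : ℝ}
    (hf : ∀ᶠ x in 𝓝 r, DifferentiableAt ℝ f x) (hf' : DifferentiableAt ℝ (deriv f) r)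
    (hr : r ≠ 0) (hcrit : r * deriv f r = 2 * f r) :
    deriv (deriv fun x => f x / x ^ 2) r = (deriv (deriv f) r - 2 * f r / r ^ 2) / r ^ 2 := by
  rw [deriv_deriv_div_sq hf hf' hr]
  linear_combination (norm := skip) (-4 / r ^ 4) * hcrit
  field_simp
  ring

namespace PhotonGas

noncomputable def linearization (F : ℝ → ℝ → ℝ) (r n : ℝ) : Matrix (Fin 2) (Fin 2) ℝ :=
  !![deriv (fun x => deriv (fun y => F x y) n) r, deriv (deriv fun y => F r y) n;
     -deriv (deriv fun x => F x n) r, -deriv (fun x => deriv (fun y => F x y) n) r]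

theorem linearization_eq_smul_of_forall_pos {F G : ℝ → ℝ → ℝ} {c r n : ℝ} (hn : 0 < n)
    (hFG : ∀ x y, 0 < y → F x y = c * G x y) :
    linearization F r n = c • linearization G r n := by
  have hloc : ∀ x, (fun y => F x y) =ᶠ[𝓝 n] fun y => c * G x y := fun x =>
    (eventually_gt_nhds hn).mono fun y hy => hFG x y hy
  have hmixed : (fun x => deriv (fun y => F x y) n) = fun x => c * deriv (fun y => G x y) n := by
    funext x
    rw [(hloc x).deriv_eq, deriv_const_mul_field']
  have hsnd : deriv (deriv fun y => F r y) n = c * deriv (deriv fun y => G r y) n := by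
    rw [(hloc r).deriv.deriv_eq, deriv_const_mul_field', deriv_const_mul_field']
  have hfst : (fun x => F x n) = fun x => c * G x n := funext fun x => hFG x n hn
  ext i j
  fin_cases i <;> fin_cases j <;>
    simp [linearization, hmixed, hsnd, hfst, deriv_const_mul_field']

noncomputable def reducedHamiltonian (f : ℝ → ℝ) (μ s : ℝ) (m : ℤ) (r n : ℝ) : ℝ :=
  f r * n ^ s + μ ^ 2 * r ^ (-m) * n ^ (s - 2)

section reducedHamiltonian

variable {f : ℝ → ℝ} {μ s : ℝ} {m : ℤ} {r n : ℝ}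

theorem hasDerivAt_reducedHamiltonian_snd (hn : n ≠ 0) :
    HasDerivAt (reducedHamiltonian f μ s m r)
      (f r * (s * n ^ (s - 1)) + μ ^ 2 * r ^ (-m) * ((s - 2) * n ^ (s - 3))) n := by
  have h := ((Real.hasDerivAt_rpow_const (p := s) (Or.inl hn)).const_mul (f r)).fun_add
    ((Real.hasDerivAt_rpow_const (p := s - 2) (Or.inl hn)).const_mul (μ ^ 2 * r ^ (-m)))
  rwa [show s - 2 - 1 = s - 3 by ring] at h

theorem deriv_deriv_reducedHamiltonian_snd (hn : n ≠ 0) :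
    deriv (deriv (reducedHamiltonian f μ s m r)) n =
      f r * (s * ((s - 1) * n ^ (s - 2))) +
        μ ^ 2 * r ^ (-m) * ((s - 2) * ((s - 3) * n ^ (s - 4))) := by
  have hfirst : deriv (reducedHamiltonian f μ s m r) =ᶠ[𝓝 n]
      fun y => f r * (s * y ^ (s - 1)) + μ ^ 2 * r ^ (-m) * ((s - 2) * y ^ (s - 3)) :=
    (eventually_ne_nhds hn).mono fun y hy => (hasDerivAt_reducedHamiltonian_snd hy).deriv
  have h := ((((Real.hasDerivAt_rpow_const (p := s - 1) (Or.inl hn)).const_mul s).const_mul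
    (f r)).fun_add (((Real.hasDerivAt_rpow_const (p := s - 3) (Or.inl hn)).const_mul
      (s - 2)).const_mul (μ ^ 2 * r ^ (-m))))
  rw [show s - 1 - 1 = s - 2 by ring, show s - 3 - 1 = s - 4 by ring] at h
  rw [hfirst.deriv_eq, h.deriv]

theorem deriv_reducedHamiltonian_fst_snd (hf : DifferentiableAt ℝ f r) (hr : r ≠ 0)
    (hn : n ≠ 0) :
    deriv (fun x => deriv (reducedHamiltonian f μ s m x) n) r =
      deriv f r * (s * n ^ (s - 1)) +
        μ ^ 2 * (-m * r ^ (-m - 1)) * ((s - 2) * n ^ (s - 3)) := by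
  have h := (hf.hasDerivAt.mul_const (s * n ^ (s - 1))).fun_add
    (((hasDerivAt_zpow (-m) r (Or.inl hr)).const_mul (μ ^ 2)).mul_const ((s - 2) * n ^ (s - 3)))
  simp only [(hasDerivAt_reducedHamiltonian_snd hn).deriv]
  push_cast at h
  exact h.deriv

theorem deriv_deriv_reducedHamiltonian_fst (hf : ∀ᶠ x in 𝓝 r, DifferentiableAt ℝ f x)
    (hf' : DifferentiableAt ℝ (deriv f) r) (hr : r ≠ 0) :
    deriv (deriv fun x => reducedHamiltonian f μ s m x n) r =
      deriv (deriv f) r * n ^ s + μ ^ 2 * (m * (m + 1) * r ^ (-m - 2)) * n ^ (s - 2) := by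
  have hfirst : deriv (fun x => reducedHamiltonian f μ s m x n) =ᶠ[𝓝 r]
      fun x => deriv f x * n ^ s + μ ^ 2 * (-m * x ^ (-m - 1)) * n ^ (s - 2) := by
    filter_upwards [hf, eventually_ne_nhds hr] with x hfx hx
    have h := (hfx.hasDerivAt.mul_const (n ^ s)).fun_add
      (((hasDerivAt_zpow (-m) x (Or.inl hx)).const_mul (μ ^ 2)).mul_const (n ^ (s - 2)))
    push_cast at h
    exact h.deriv
  have h := (hf'.hasDerivAt.mul_const (n ^ s)).fun_add
    ((((hasDerivAt_zpow (-m - 1) r (Or.inl hr)).const_mul (-m : ℝ)).const_mul (μ ^ 2)).mul_const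
      (n ^ (s - 2)))
  rw [hfirst.deriv_eq, h.deriv, show -m - 1 - 1 = -m - 2 by ring]
  push_cast
  ring

theorem det_linearization_reducedHamiltonian (hf : ∀ᶠ x in 𝓝 r, DifferentiableAt ℝ f x)
    (hf' : DifferentiableAt ℝ (deriv f) r) (hr : r ≠ 0) (hn : 0 < n) (hsm : s * (m + 2) = 4)
    (hcrit : r * deriv f r = 2 * f r) (hrel : m * μ ^ 2 * r ^ (-m) = 2 * n ^ 2 * f r) :
    (linearization (reducedHamiltonian f μ s m) r n).det =
      2 * s * f r * (n ^ (s - 1)) ^ 2 * (deriv (deriv f) r - 2 * f r / r ^ 2) := by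
  have hn₀ := hn.ne'
  set p := n ^ (s - 1)
  have hpow : ∀ k : ℕ, n ^ (s - 1 - k) = p / n ^ k := fun k => by
    rw [Real.rpow_sub hn, Real.rpow_natCast]
  have hmixed : deriv (fun x => deriv (reducedHamiltonian f μ s m x) n) r = 4 * p * f r / r := by
    rw [deriv_reducedHamiltonian_fst_snd hf.self_of_nhds hr hn₀, zpow_sub_one₀ hr,
      show s - 3 = s - 1 - (2 : ℕ) by push_cast; ring, hpow]
    linear_combination (norm := skip) (p * s / r) * hcrit - (p * (s - 2) / (r * n ^ 2)) * hrel
    field_simp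
    ring
  have hsnd : deriv (deriv (reducedHamiltonian f μ s m r)) n = 2 * s * p * f r / n := by
    rw [deriv_deriv_reducedHamiltonian_snd hn₀, show s - 2 = s - 1 - (1 : ℕ) by push_cast; ring,
      show s - 4 = s - 1 - (3 : ℕ) by push_cast; ring, hpow, hpow]
    linear_combination (norm := skip)
      (p * (s - 3) / n ^ 3) * ((μ ^ 2 * r ^ (-m) / 2) * hsm - (s / 2) * hrel)
    field_simp
    ring
  have hfst : deriv (deriv fun x => reducedHamiltonian f μ s m x n) r =
      p * n * (deriv (deriv f) r + 2 * (m + 1) * f r / r ^ 2) := by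
    rw [deriv_deriv_reducedHamiltonian_fst hf hf' hr, zpow_sub₀ hr, zpow_ofNat,
      ← sub_add_cancel s 1, Real.rpow_add_one hn₀, show s - 1 + 1 - 2 = s - 1 - (1 : ℕ) by
        push_cast; ring, hpow]
    linear_combination (norm := skip) (p * (m + 1) / (r ^ 2 * n)) * hrel
    field_simp
    ring
  rw [linearization, Matrix.det_fin_two_of, hmixed, hsnd, hfst]
  linear_combination (norm := skip) (4 * p ^ 2 * f r ^ 2 / r ^ 2) * hsm
  field_simp
  ring

end reducedHamiltonian

theorem enthalpy_sq_mul_eq_reducedHamiltonian (a γ μ : ℝ) (f : ℝ → ℝ) (m : ℕ) (r : ℝ) {n : ℝ}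
    (hn : 0 < n) :
    (a * n ^ (γ - 1)) ^ 2 * (f r + μ ^ 2 / (r ^ m * n ^ 2)) =
      a ^ 2 * reducedHamiltonian f μ (2 * (γ - 1)) m r n := by
  rw [reducedHamiltonian, mul_pow, ← Real.rpow_natCast (n ^ (γ - 1)), ← Real.rpow_mul hn.le,
    Real.rpow_sub hn, zpow_neg, zpow_natCast, Real.rpow_two, Nat.cast_ofNat, mul_comm (γ - 1)]
  field_simp

theorem adiabatic_index_sub_one {D : ℕ} {γ : ℝ} (hD : 2 ≤ D) (hγ : γ = D / ((D : ℝ) - 1)) :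
    γ - 1 = 1 / ((D : ℝ) - 1) := by
  have hD₁ : (D : ℝ) - 1 ≠ 0 := by
    rw [sub_ne_zero, Nat.cast_ne_one]
    omega
  rw [hγ]
  field_simp
  ring

theorem two_mul_adiabatic_index_sub_one_mul {D : ℕ} {γ : ℝ} (hD : 2 ≤ D)
    (hγ : γ = D / ((D : ℝ) - 1)) :
    2 * (γ - 1) * ((((2 * (D - 2) : ℕ) : ℤ) : ℝ) + 2) = 4 := by
  have hD₁ : (D : ℝ) - 1 ≠ 0 := by
    rw [sub_ne_zero, Nat.cast_ne_one]
    omega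
  rw [adiabatic_index_sub_one hD hγ]
  push_cast [Nat.cast_sub hD]
  field_simp
  ring

theorem critical_density_relation {D : ℕ} (hD : 2 ≤ D) {μ φ r n : ℝ} (hφ : 0 < φ) (hr : r ≠ 0)
    (hn : n = √(((D : ℝ) - 2) / φ) * |μ| / r ^ (D - 2)) :
    (((2 * (D - 2) : ℕ) : ℤ) : ℝ) * μ ^ 2 * r ^ (-((2 * (D - 2) : ℕ) : ℤ)) = 2 * n ^ 2 * φ := by
  have hD₂ : (0 : ℝ) ≤ D - 2 := by
    rw [sub_nonneg]
    exact_mod_cast hD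
  rw [hn, zpow_neg, zpow_natCast, div_pow, mul_pow, sq_abs, Real.sq_sqrt (div_nonneg hD₂ hφ.le),
    ← pow_mul, mul_comm (D - 2)]
  push_cast [Nat.cast_sub hD]
  field_simp

end PhotonGas

open PhotonGas

/-- At a critical point of ideal photon gas accretion, the determinant of the
linearization matrix is negative iff (f r⁻²)''(r_c) < 0 (unstable photon sphere ↔ saddle). -/
theorem photon_gas_saddle_iff_unstable (D : ℕ) (hD : 3 ≤ D) (μ k : ℝ) (hμ : μ ≠ 0)
    (hk : 0 < k) (γ : ℝ) (hγ : γ = (D : ℝ) / ((D : ℝ) - 1))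
    (h : ℝ → ℝ) (hh : ∀ n, h n = k * γ / (γ - 1) * n ^ (γ - 1))
    (f : ℝ → ℝ) (r_c n_c : ℝ) (hr : 0 < r_c)
    (hfd : ContDiffAt ℝ 2 f r_c) (hfpos : 0 < f r_c)
    (hcrit : r_c * deriv f r_c = 2 * f r_c)
    (hn : n_c = Real.sqrt (((D : ℝ) - 2) / f r_c) * |μ| / r_c ^ (D - 2))
    (F : ℝ → ℝ → ℝ)
    (hF : ∀ r n, F r n = h n ^ 2 * (f r + μ ^ 2 / (r ^ (2 * (D - 2)) * n ^ 2)))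
    (M : Matrix (Fin 2) (Fin 2) ℝ)
    (hM : M = !![deriv (fun r => deriv (fun n => F r n) n_c) r_c,
                 deriv (deriv (fun n => F r_c n)) n_c;
                 -(deriv (deriv (fun r => F r n_c)) r_c),
                 -(deriv (fun r => deriv (fun n => F r n) n_c) r_c)]) :
    M.det < 0 ↔ deriv (deriv (fun r => f r / r ^ 2)) r_c < 0 := by
  have hD₂ : 2 ≤ D := by omega
  have hγ₁ : 0 < γ - 1 := by
    rw [adiabatic_index_sub_one hD₂ hγ, one_div_pos, sub_pos, Nat.one_lt_cast]
    omega
  set c := k * γ / (γ - 1)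
  set s := 2 * (γ - 1)
  set m : ℕ := 2 * (D - 2)
  have hc : 0 < c := div_pos (mul_pos hk (by linarith)) hγ₁
  have hn_pos : 0 < n_c := by
    have hD₂' : (0 : ℝ) < D - 2 := by rw [sub_pos]; exact_mod_cast hD
    rw [hn]
    exact div_pos (mul_pos (Real.sqrt_pos.mpr (div_pos hD₂' hfpos)) (abs_pos.mpr hμ))
      (pow_pos hr _)
  have hFH : ∀ x y, 0 < y → F x y = c ^ 2 * reducedHamiltonian f μ s m x y := fun x y hy => by
    rw [hF, hh, enthalpy_sq_mul_eq_reducedHamiltonian _ _ _ _ _ _ hy]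
  have hf : ∀ᶠ x in 𝓝 r_c, DifferentiableAt ℝ f x :=
    (hfd.eventually (by simp)).mono fun x hx => hx.differentiableAt (by norm_num)
  have hf' : DifferentiableAt ℝ (deriv f) r_c :=
    (hfd.derivWithin (m := 1) (by norm_num)).differentiableAt (by norm_num)
  have hdet : M.det = (c ^ 2) ^ 2 * (2 * s * f r_c * (n_c ^ (s - 1)) ^ 2) *
      (deriv (deriv f) r_c - 2 * f r_c / r_c ^ 2) := by
    rw [show M = linearization F r_c n_c from hM, linearization_eq_smul_of_forall_pos hn_pos hFH,
      Matrix.det_smul, Fintype.card_fin, det_linearization_reducedHamiltonian hf hf' hr.ne' hn_pos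
        (two_mul_adiabatic_index_sub_one_mul hD₂ hγ) hcrit
        (critical_density_relation hD₂ hfpos hr.ne' hn)]
    ring
  have hK : 0 < (c ^ 2) ^ 2 * (2 * s * f r_c * (n_c ^ (s - 1)) ^ 2) := by positivity
  rw [hdet, deriv_deriv_div_sq_of_mul_deriv_eq hf hf' hr.ne' hcrit, div_lt_iff₀ (by positivity),
    zero_mul]
  exact ⟨fun hneg => neg_of_mul_neg_right hneg hK.le, mul_neg_of_pos_of_neg hK⟩
end

section
/- For the Schwarzschild metric function f(r) = 1 - 2M/r with M > 0 in D = 4, the unique r > 2M with (f(r)/r²)' = 0 is r = 3M, and at r = 3M one has (f r⁻²)'' < 0 (unstable photon sphere). Consequently, the sonic point of any physical transonic spherically symmetric ideal photon gas (γ = 4/3) accretion flow lies at radius r = 3M. -/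
/-!
For any `f`, `(f / r²)' = (r f' - 2 f) / r³`, so the photon gas sonic condition
`(1/3)(4 f + r f') = r f'`, i.e. `r f' = 2 f`, is exactly the photon sphere condition
`(f / r²)' = 0`. For `f = 1 - 2M/r` this derivative is `2 (3M - r) / r⁴`, whose only zero
is `r = 3M`, where its own derivative is `-2 / (3M)⁴ < 0`.
-/

theorem HasDerivAt.div_sq {f : ℝ → ℝ} {f' r : ℝ} (hf : HasDerivAt f f' r) (hr : r ≠ 0) :
    HasDerivAt (fun s => f s / s ^ 2) ((r * f' - 2 * f r) / r ^ 3) r := by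
  refine (hf.div (hasDerivAt_pow 2 r) (pow_ne_zero 2 hr)).congr_deriv ?_
  field_simp
  ring

section Schwarzschild

variable (M : ℝ)

theorem hasDerivAt_one_sub_div {r : ℝ} (hr : r ≠ 0) :
    HasDerivAt (fun s => 1 - 2 * M / s) (2 * M / r ^ 2) r := by
  have h := ((hasDerivAt_inv hr).const_mul (2 * M)).const_sub 1
  simp only [← div_eq_mul_inv] at h
  exact h.congr_deriv (by ring)

theorem deriv_one_sub_div_div_sq {r : ℝ} (hr : r ≠ 0) :
    deriv (fun s => (1 - 2 * M / s) / s ^ 2) r = 2 * (3 * M - r) / r ^ 4 := by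
  rw [((hasDerivAt_one_sub_div M hr).div_sq hr).deriv]
  field_simp
  ring

theorem deriv_deriv_one_sub_div_div_sq (hM : M ≠ 0) :
    deriv (deriv fun s => (1 - 2 * M / s) / s ^ 2) (3 * M) = -2 / (3 * M) ^ 4 := by
  have h3M : 3 * M ≠ 0 := mul_ne_zero three_ne_zero hM
  have hev : deriv (fun s => (1 - 2 * M / s) / s ^ 2) =ᶠ[nhds (3 * M)]
      fun s => 2 * (3 * M - s) / s ^ 4 := by
    filter_upwards [compl_singleton_mem_nhds h3M] with s hs
    exact deriv_one_sub_div_div_sq M hs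
  have hg : HasDerivAt (fun s => 2 * (3 * M - s) / s ^ 4) (-2 / (3 * M) ^ 4) (3 * M) := by
    refine ((((hasDerivAt_id' _).const_sub (3 * M)).const_mul 2).div
      (hasDerivAt_pow 4 _) (pow_ne_zero 4 h3M)).congr_deriv ?_
    field_simp
    ring
  rw [hev.deriv_eq, hg.deriv]

end Schwarzschild

/-- Schwarzschild (D = 4): the unique r > 2M with (f/r²)' = 0 is r = 3M, where the
photon sphere is unstable ((f r⁻²)'' < 0); consequently any sonic radius r_s > 2M,
i.e. any radius satisfying the photon gas (γ = 4/3, v_s² = 1/3) critical condition,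
equals 3M. -/
theorem schwarzschild_photon_sphere_sonic_point (M : ℝ) (hM : 0 < M)
    (f : ℝ → ℝ) (hf : ∀ r, f r = 1 - 2 * M / r) :
    (∀ r : ℝ, 2 * M < r → (deriv (fun s => f s / s ^ 2) r = 0 ↔ r = 3 * M)) ∧
    deriv (deriv (fun s => f s / s ^ 2)) (3 * M) < 0 ∧
    (∀ r_s : ℝ, 2 * M < r_s →
      (1 / 3 : ℝ) * (2 * 2 * f r_s + r_s * deriv f r_s) = r_s * deriv f r_s →
      r_s = 3 * M) := by
  obtain rfl : f = fun r => 1 - 2 * M / r := funext hf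
  have photon_sphere (r : ℝ) (hr : 2 * M < r) :
      deriv (fun s => (1 - 2 * M / s) / s ^ 2) r = 0 ↔ r = 3 * M := by
    have hr0 : r ≠ 0 := (by linarith : 0 < r).ne'
    rw [deriv_one_sub_div_div_sq M hr0, div_eq_zero_iff, or_iff_left (pow_ne_zero 4 hr0)]
    constructor <;> intro h <;> linarith
  refine ⟨photon_sphere, ?_, fun r hr hsonic => (photon_sphere r hr).1 ?_⟩
  · rw [deriv_deriv_one_sub_div_div_sq M hM.ne']
    exact div_neg_of_neg_of_pos (by norm_num) (by positivity)
  · have hr0 : r ≠ 0 := (by linarith : 0 < r).ne'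
    have hf' := hasDerivAt_one_sub_div M hr0
    rw [hf'.deriv] at hsonic
    rw [(hf'.div_sq hr0).deriv, div_eq_zero_iff]
    left
    linarith
end
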